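/- (Theorem 1, optimal coordinate increment.) Let α > 0, κ > 0, β, η ∈ ℝ, and a ∈ [0,1] with αa < 1, and define g(d) = log(1 + αd) + (καd² − (β+η)d)/(1 + αd) on {d : 1+αd > 0} ⊇ [−a, 1−a]. Define d* as follows: if 4κ(κ+β+η) + α² > 0, set d* = min{max{d̂, −a}, 1−a} with d̂ = (−α − 2κ + √(4κ(κ+β+η) + α²))/(2κα); if 4κ(κ+β+η) + α² ≤ 0, set d* = −a. Then d* is an optimal solution of min_{d ∈ [−a, 1−a]} g(d), i.e., g(d*) ≤ g(d) for all d ∈ [−a, 1−a]. -/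

import Mathlib

/-!
Write `Δ = 4κ(κ+β+η) + α²` and `t(d) = 2καd + α + 2κ`. A direct computation gives
`g'(d) = (t(d)² - Δ) / (4κ(1+αd)²)`, and `t(d) = 2κ(1+αd) + α > 0` on the domain of `g`, so `g'`
has the sign of `t(d) - √Δ = 2κα(d - d̂)`, with `d̂ = incrementCriticalPoint`. Hence `g`
decreases left of `d̂` and increases right of it, and on an interval its minimum is attained at
`d̂` clamped to the interval. When `Δ ≤ 0` the point `d̂` lies left of the whole domain, so the
clamp is the left endpoint `-a`.
-/

open Real Set

section ClampMinimizer

variable {ι γ : Type*} [LinearOrder ι] [Preorder γ] {f : ι → γ} {l u c : ι}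

theorem isMinOn_min_max_of_antitoneOn_of_monotoneOn (hanti : AntitoneOn f (Icc l u ∩ Iic c))
    (hmono : MonotoneOn f (Icc l u ∩ Ici c)) : IsMinOn f (Icc l u) (min (max c l) u) := by
  refine isMinOn_iff.mpr fun x hx => ?_
  have hlu : l ≤ u := hx.1.trans hx.2
  rcases le_total x (min (max c l) u) with hxp | hpx
  · rcases le_total c l with hcl | hlc
    · rw [max_eq_right hcl, min_eq_left hlu] at hxp ⊢
      rw [le_antisymm hxp hx.1]
    · rw [max_eq_left hlc] at hxp ⊢
      exact hanti ⟨hx, hxp.trans (min_le_left _ _)⟩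
        ⟨⟨le_min hlc hlu, min_le_right _ _⟩, min_le_left _ _⟩ hxp
  · rcases le_total c u with hcu | huc
    · rw [min_eq_left (max_le hcu hlu)] at hpx ⊢
      exact hmono ⟨⟨le_max_right _ _, max_le hcu hlu⟩, le_max_left _ _⟩
        ⟨hx, (le_max_left _ _).trans hpx⟩ hpx
    · rw [min_eq_right (huc.trans (le_max_left _ _))] at hpx ⊢
      rw [le_antisymm hx.2 hpx]

end ClampMinimizer

section IncrementObjective

variable (α κ β η : ℝ)

noncomputable def incrementObjective (d : ℝ) : ℝ :=
  log (1 + α * d) + (κ * α * d ^ 2 - (β + η) * d) / (1 + α * d)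

noncomputable def incrementCriticalPoint : ℝ :=
  (-α - 2 * κ + √(4 * κ * (κ + β + η) + α ^ 2)) / (2 * κ * α)

variable {α κ β η}

theorem hasDerivAt_incrementObjective {d : ℝ} (hκ : κ ≠ 0) (hd : 0 < 1 + α * d) :
    HasDerivAt (incrementObjective α κ β η)
      (((2 * κ * α * d + α + 2 * κ) ^ 2 - (4 * κ * (κ + β + η) + α ^ 2)) /
        (4 * κ * (1 + α * d) ^ 2)) d := by
  have hlin : HasDerivAt (fun x => 1 + α * x) α d := by
    simpa using ((hasDerivAt_id d).const_mul α).const_add 1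
  have hnum : HasDerivAt (fun x => κ * α * x ^ 2 - (β + η) * x) (κ * α * (2 * d) - (β + η)) d := by
    exact (((hasDerivAt_pow 2 d).const_mul (κ * α)).sub
      ((hasDerivAt_id d).const_mul (β + η))).congr_deriv (by simp)
  refine ((hlin.log hd.ne').add (hnum.div hlin hd.ne')).congr_deriv ?_
  field_simp
  ring

theorem sub_sqrt_eq_mul_sub_incrementCriticalPoint (hα : α ≠ 0) (hκ : κ ≠ 0) (d : ℝ) :
    2 * κ * α * d + α + 2 * κ - √(4 * κ * (κ + β + η) + α ^ 2) =
      2 * κ * α * (d - incrementCriticalPoint α κ β η) := by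
  unfold incrementCriticalPoint
  field_simp
  ring

theorem antitoneOn_incrementObjective (hα : 0 < α) (hκ : 0 < κ) {S : Set ℝ} (hS : Convex ℝ S)
    (hdom : ∀ d ∈ S, 0 < 1 + α * d) (hle : ∀ d ∈ S, d ≤ incrementCriticalPoint α κ β η) :
    AntitoneOn (incrementObjective α κ β η) S := by
  refine antitoneOn_of_hasDerivWithinAt_nonpos hS
    (fun d hd => (hasDerivAt_incrementObjective hκ.ne' (hdom d hd)).continuousAt.continuousWithinAt)
    (fun d hd => (hasDerivAt_incrementObjective hκ.ne' (hdom d (interior_subset hd))).hasDerivWithinAt)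
    fun d hd => ?_
  have hdS := interior_subset hd
  have ht : 0 < 2 * κ * α * d + α + 2 * κ := by nlinarith [hdom d hdS]
  have hsign := sub_sqrt_eq_mul_sub_incrementCriticalPoint (β := β) (η := η) hα.ne' hκ.ne' d
  have hsq := (le_sqrt' ht).mp (by nlinarith [hle d hdS, mul_pos hκ hα])
  exact div_nonpos_of_nonpos_of_nonneg (by linarith) (by positivity)

theorem monotoneOn_incrementObjective (hα : 0 < α) (hκ : 0 < κ) {S : Set ℝ} (hS : Convex ℝ S)
    (hdom : ∀ d ∈ S, 0 < 1 + α * d) (hge : ∀ d ∈ S, incrementCriticalPoint α κ β η ≤ d) :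
    MonotoneOn (incrementObjective α κ β η) S := by
  refine monotoneOn_of_hasDerivWithinAt_nonneg hS
    (fun d hd => (hasDerivAt_incrementObjective hκ.ne' (hdom d hd)).continuousAt.continuousWithinAt)
    (fun d hd => (hasDerivAt_incrementObjective hκ.ne' (hdom d (interior_subset hd))).hasDerivWithinAt)
    fun d hd => ?_
  have hdS := interior_subset hd
  have ht : 0 < 2 * κ * α * d + α + 2 * κ := by nlinarith [hdom d hdS]
  have hsign := sub_sqrt_eq_mul_sub_incrementCriticalPoint (β := β) (η := η) hα.ne' hκ.ne' d
  have hsq := (sqrt_le_left ht.le).mp (by nlinarith [hge d hdS, mul_pos hκ hα])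
  exact div_nonneg (by linarith) (by positivity)

theorem incrementCriticalPoint_lt (hα : 0 < α) (hκ : 0 < κ)
    (hΔ : 4 * κ * (κ + β + η) + α ^ 2 ≤ 0) {d : ℝ} (hd : 0 < 1 + α * d) :
    incrementCriticalPoint α κ β η < d := by
  have hsign := sub_sqrt_eq_mul_sub_incrementCriticalPoint (β := β) (η := η) hα.ne' hκ.ne' d
  rw [sqrt_eq_zero'.mpr hΔ] at hsign
  nlinarith [mul_pos hκ hα]

end IncrementObjective

theorem stmt_4 (α κ β η a : ℝ) (hα : 0 < α) (hκ : 0 < κ) (haa : α * a < 1) :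
    let g : ℝ → ℝ := fun d => Real.log (1 + α * d) + (κ * α * d ^ 2 - (β + η) * d) / (1 + α * d)
    let dstar : ℝ :=
      if 0 < 4 * κ * (κ + β + η) + α ^ 2 then
        min (max ((-α - 2 * κ + Real.sqrt (4 * κ * (κ + β + η) + α ^ 2)) / (2 * κ * α)) (-a))
          (1 - a)
      else -a
    ∀ d ∈ Set.Icc (-a) (1 - a), g dstar ≤ g d := by
  intro g dstar
  have hdom : ∀ d ∈ Icc (-a) (1 - a), 0 < 1 + α * d := fun d hd => by nlinarith [hd.1]
  have hdstar : dstar = min (max (incrementCriticalPoint α κ β η) (-a)) (1 - a) := by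
    by_cases hΔ : 0 < 4 * κ * (κ + β + η) + α ^ 2
    · exact if_pos hΔ
    · have hlt := incrementCriticalPoint_lt (β := β) (η := η) hα hκ (not_lt.mp hΔ)
        (hdom (-a) ⟨le_rfl, by linarith⟩)
      rw [max_eq_right hlt.le, min_eq_left (by linarith)]
      exact if_neg hΔ
  rw [hdstar]
  exact isMinOn_iff.mp <| isMinOn_min_max_of_antitoneOn_of_monotoneOn
    (antitoneOn_incrementObjective hα hκ ((convex_Icc _ _).inter (convex_Iic _))
      (fun d hd => hdom d hd.1) fun _ hd => hd.2)
    (monotoneOn_incrementObjective hα hκ ((convex_Icc _ _).inter (convex_Ici _))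
      (fun d hd => hdom d hd.1) fun _ hd => hd.2)
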